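/- arXiv:2602.05744 — 2 statements merged into one kernel-verified Lean document; each statement's English description precedes it below -/
import Mathlib

section
/- Let K ≥ 2 be an even integer and let α ∈ (1,2]. Then the infimum of 2·D_α(p‖q)/‖p−q‖₁² over all pairs p ≠ q in relint(Δ^K) equals K^{1−α}. In particular, D_α(p‖q) ≥ (K^{1−α}/2)·‖p−q‖₁² for all p, q ∈ relint(Δ^K), and K^{1−α} is the largest constant C ≥ 0 such that D_α(p‖q) ≥ (C/2)·‖p−q‖₁² holds for all p, q ∈ relint(Δ^K). -/
open Finset Real

/-- The α-Tsallis entropy on the positive orthant (Shannon for α = 1, Burg for α = 0). -/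
noncomputable def tsallis (α : ℝ) {K : ℕ} (p : Fin K → ℝ) : ℝ :=
  if α = 0 then ∑ k, Real.log (p k)
  else if α = 1 then -∑ k, p k * Real.log (p k)
  else (∑ k, p k ^ α) / (α * (1 - α))

/-- The gradient of the α-Tsallis entropy on the positive orthant. -/
noncomputable def tsallisGrad (α : ℝ) {K : ℕ} (q : Fin K → ℝ) (k : Fin K) : ℝ :=
  if α = 0 then 1 / q k
  else if α = 1 then -(1 + Real.log (q k))
  else -(q k ^ (α - 1)) / (α - 1)

/-- The Bregman divergence D_α of the negative α-Tsallis entropy: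
`D_α(p‖q) = -S_α(p) + S_α(q) + ⟨∇S_α(q), p - q⟩`. -/
noncomputable def breg (α : ℝ) {K : ℕ} (p q : Fin K → ℝ) : ℝ :=
  -tsallis α p + tsallis α q + ∑ k, tsallisGrad α q k * (p k - q k)

/-- The relative interior of the probability simplex Δ^K. -/
def relintSimplex (K : ℕ) : Set (Fin K → ℝ) :=
  {p | (∀ k, 0 < p k ∧ p k < 1) ∧ ∑ k, p k = 1}

/-- The ℓ¹ norm on ℝ^K. -/
noncomputable def l1 {K : ℕ} (x : Fin K → ℝ) : ℝ := ∑ k, |x k|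

/-! Along the segment `r = q + s (p - q)` the Bregman divergence `D_α(p‖q)` is the second-order
Taylor remainder of `-S_α`, whose second derivative there is `∑ (p_k - q_k)² r_k ^ (α - 2)`.
For `r` in the simplex, Cauchy–Schwarz together with Jensen's bound `∑ r_k ^ (2 - α) ≤ K ^ (α - 1)`
bounds this from below by `K ^ (1 - α) ‖p - q‖₁²`. For even `K`, moving the uniform distribution
by `±ε` with alternating signs keeps every `r_k` within `ε` of `1 / K`, so the ratio
`2 D_α / ‖p - q‖₁²` tends to `K ^ (1 - α)` as `ε → 0`. -/

open Set

lemma monotoneOn_Icc_of_hasDerivAt_nonneg {f f' : ℝ → ℝ} {a b : ℝ}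
    (hf : ∀ s ∈ Icc a b, HasDerivAt f (f' s) s) (hf' : ∀ s ∈ Icc a b, 0 ≤ f' s) :
    MonotoneOn f (Icc a b) :=
  monotoneOn_of_hasDerivWithinAt_nonneg (convex_Icc a b)
    (fun s hs ↦ (hf s hs).continuousAt.continuousWithinAt)
    (fun s hs ↦ (hf s (interior_subset hs)).hasDerivWithinAt)
    (fun s hs ↦ hf' s (interior_subset hs))

lemma le_taylor_two_of_le {g g' g'' : ℝ → ℝ} {c : ℝ}
    (hg : ∀ s ∈ Icc (0 : ℝ) 1, HasDerivAt g (g' s) s)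
    (hg' : ∀ s ∈ Icc (0 : ℝ) 1, HasDerivAt g' (g'' s) s)
    (hc : ∀ s ∈ Icc (0 : ℝ) 1, g'' s ≤ c) :
    g 1 ≤ g 0 + g' 0 + c / 2 := by
  have h₁_mono : MonotoneOn (fun s ↦ g' 0 + c * s - g' s) (Icc 0 1) := by
    refine monotoneOn_Icc_of_hasDerivAt_nonneg (f' := fun s ↦ c - g'' s) (fun s hs ↦ ?_)
      (fun s hs ↦ sub_nonneg.2 (hc s hs))
    simpa using (((hasDerivAt_id' s).const_mul c).const_add (g' 0)).fun_sub (hg' s hs)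
  have h₁_nonneg : ∀ s ∈ Icc (0 : ℝ) 1, 0 ≤ g' 0 + c * s - g' s := fun s hs ↦ by
    simpa using h₁_mono (left_mem_Icc.2 zero_le_one) hs hs.1
  have h_mono : MonotoneOn (fun s ↦ g 0 + g' 0 * s + c / 2 * s ^ 2 - g s) (Icc 0 1) := by
    refine monotoneOn_Icc_of_hasDerivAt_nonneg (fun s hs ↦ ?_) h₁_nonneg
    refine ((((hasDerivAt_id' s).const_mul (g' 0)).const_add (g 0)).fun_add
      ((hasDerivAt_pow 2 s).const_mul (c / 2))).fun_sub (hg s hs) |>.congr_deriv ?_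
    norm_num
    ring
  simpa using h_mono (left_mem_Icc.2 zero_le_one) (right_mem_Icc.2 zero_le_one) zero_le_one

lemma taylor_two_le_of_le {g g' g'' : ℝ → ℝ} {c : ℝ}
    (hg : ∀ s ∈ Icc (0 : ℝ) 1, HasDerivAt g (g' s) s)
    (hg' : ∀ s ∈ Icc (0 : ℝ) 1, HasDerivAt g' (g'' s) s)
    (hc : ∀ s ∈ Icc (0 : ℝ) 1, c ≤ g'' s) :
    g 0 + g' 0 + c / 2 ≤ g 1 := by
  have := le_taylor_two_of_le (fun s hs ↦ (hg s hs).fun_neg) (fun s hs ↦ (hg' s hs).fun_neg)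
    (fun s hs ↦ neg_le_neg (hc s hs))
  linarith

lemma add_mul_sub_pos {x y s : ℝ} (hx : 0 < x) (hy : 0 < y) (hs : s ∈ Icc (0 : ℝ) 1) :
    0 < y + s * (x - y) := by
  have := convex_Ioi (0 : ℝ) hy hx (sub_nonneg.2 hs.2) hs.1 (sub_add_cancel 1 s)
  simp only [smul_eq_mul, Set.mem_Ioi] at this
  linarith

section Bregman

variable {K : ℕ} {α : ℝ}

lemma tsallis_of_ne (hα0 : α ≠ 0) (hα1 : α ≠ 1) (p : Fin K → ℝ) :
    tsallis α p = (∑ k, p k ^ α) / (α * (1 - α)) := by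
  simp [tsallis, hα0, hα1]

lemma tsallisGrad_of_ne (hα0 : α ≠ 0) (hα1 : α ≠ 1) (q : Fin K → ℝ) (k : Fin K) :
    tsallisGrad α q k = -(q k ^ (α - 1)) / (α - 1) := by
  simp [tsallisGrad, hα0, hα1]

lemma hasDerivAt_tsallis_line (hα0 : α ≠ 0) (hα1 : α ≠ 1) (q d : Fin K → ℝ) {s : ℝ}
    (hpos : ∀ k, 0 < q k + s * d k) :
    HasDerivAt (fun t ↦ tsallis α fun k ↦ q k + t * d k)
      (∑ k, tsallisGrad α (fun k ↦ q k + s * d k) k * d k) s := by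
  simp only [tsallis_of_ne hα0 hα1, tsallisGrad_of_ne hα0 hα1]
  have hterm k := (((hasDerivAt_id' s).mul_const (d k)).const_add (q k)).rpow_const
    (p := α) (Or.inl (hpos k).ne')
  refine (HasDerivAt.fun_sum fun k _ ↦ hterm k).div_const _ |>.congr_deriv ?_
  rw [Finset.sum_div]
  refine Finset.sum_congr rfl fun k _ ↦ ?_
  field_simp
  ring

lemma hasDerivAt_tsallisGrad_line (hα0 : α ≠ 0) (hα1 : α ≠ 1) (q d : Fin K → ℝ) {s : ℝ}
    (hpos : ∀ k, 0 < q k + s * d k) :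
    HasDerivAt (fun t ↦ ∑ k, tsallisGrad α (fun k ↦ q k + t * d k) k * d k)
      (-∑ k, d k ^ 2 * (q k + s * d k) ^ (α - 2)) s := by
  simp only [tsallisGrad_of_ne hα0 hα1]
  have hterm k := ((((hasDerivAt_id' s).mul_const (d k)).const_add (q k)).rpow_const
    (p := α - 1) (Or.inl (hpos k).ne')).neg.div_const (α - 1) |>.mul_const (d k)
  refine (HasDerivAt.fun_sum fun k _ ↦ hterm k) |>.congr_deriv ?_
  rw [← Finset.sum_neg_distrib]
  refine Finset.sum_congr rfl fun k _ ↦ ?_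
  rw [show α - 1 - 1 = α - 2 by ring]
  field_simp

lemma le_breg_of_le_sum (hα0 : α ≠ 0) (hα1 : α ≠ 1) {p q : Fin K → ℝ} (hp : ∀ k, 0 < p k)
    (hq : ∀ k, 0 < q k) {c : ℝ}
    (hc : ∀ s ∈ Icc (0 : ℝ) 1, c ≤ ∑ k, (p k - q k) ^ 2 * (q k + s * (p k - q k)) ^ (α - 2)) :
    c / 2 ≤ breg α p q := by
  have hpos s (hs : s ∈ Icc (0 : ℝ) 1) k := add_mul_sub_pos (hp k) (hq k) hs
  have := le_taylor_two_of_le (c := -c)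
    (fun s hs ↦ hasDerivAt_tsallis_line hα0 hα1 q (fun k ↦ p k - q k) (hpos s hs))
    (fun s hs ↦ hasDerivAt_tsallisGrad_line hα0 hα1 q (fun k ↦ p k - q k) (hpos s hs))
    (fun s hs ↦ neg_le_neg (hc s hs))
  simp only [one_mul, add_sub_cancel, zero_mul, add_zero] at this
  rw [breg]
  linarith

lemma breg_le_of_sum_le (hα0 : α ≠ 0) (hα1 : α ≠ 1) {p q : Fin K → ℝ} (hp : ∀ k, 0 < p k)
    (hq : ∀ k, 0 < q k) {c : ℝ}
    (hc : ∀ s ∈ Icc (0 : ℝ) 1, ∑ k, (p k - q k) ^ 2 * (q k + s * (p k - q k)) ^ (α - 2) ≤ c) :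
    breg α p q ≤ c / 2 := by
  have hpos s (hs : s ∈ Icc (0 : ℝ) 1) k := add_mul_sub_pos (hp k) (hq k) hs
  have := taylor_two_le_of_le (c := -c)
    (fun s hs ↦ hasDerivAt_tsallis_line hα0 hα1 q (fun k ↦ p k - q k) (hpos s hs))
    (fun s hs ↦ hasDerivAt_tsallisGrad_line hα0 hα1 q (fun k ↦ p k - q k) (hpos s hs))
    (fun s hs ↦ neg_le_neg (hc s hs))
  simp only [one_mul, add_sub_cancel, zero_mul, add_zero] at this
  rw [breg]
  linarith

end Bregman

section PowerMean

variable {ι : Type*} [Fintype ι]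

lemma nonempty_of_sum_eq_one {r : ι → ℝ} (hr1 : ∑ i, r i = 1) : Nonempty ι := by
  obtain ⟨i, -⟩ := Finset.nonempty_of_sum_ne_zero (hr1.trans_ne one_ne_zero)
  exact ⟨i⟩

lemma sum_rpow_le_card_rpow {β : ℝ} (hβ0 : 0 ≤ β) (hβ1 : β ≤ 1) {r : ι → ℝ}
    (hr : ∀ i, 0 ≤ r i) (hr1 : ∑ i, r i = 1) :
    ∑ i, r i ^ β ≤ (Fintype.card ι : ℝ) ^ (1 - β) := by
  have := nonempty_of_sum_eq_one hr1
  have hn : (0 : ℝ) < Fintype.card ι := by exact_mod_cast Fintype.card_pos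
  have jensen := (concaveOn_rpow hβ0 hβ1).le_map_sum (t := Finset.univ)
    (w := fun _ ↦ (Fintype.card ι : ℝ)⁻¹) (p := r) (fun _ _ ↦ inv_nonneg.2 hn.le)
    (by simp [hn.ne']) (fun i _ ↦ Set.mem_Ici.2 (hr i))
  simp only [smul_eq_mul, ← Finset.mul_sum, hr1, mul_one] at jensen
  rw [inv_rpow hn.le, ← rpow_neg hn.le, inv_mul_le_iff₀ hn] at jensen
  calc ∑ i, r i ^ β ≤ Fintype.card ι * (Fintype.card ι : ℝ) ^ (-β) := jensen
    _ = (Fintype.card ι : ℝ) ^ (1 - β) := by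
      rw [sub_eq_add_neg, rpow_add hn, rpow_one]

lemma card_rpow_mul_sq_sum_abs_le {α : ℝ} (hα1 : 1 ≤ α) (hα2 : α ≤ 2) {r : ι → ℝ}
    (hr : ∀ i, 0 < r i) (hr1 : ∑ i, r i = 1) (d : ι → ℝ) :
    (Fintype.card ι : ℝ) ^ (1 - α) * (∑ i, |d i|) ^ 2 ≤ ∑ i, d i ^ 2 * r i ^ (α - 2) := by
  have := nonempty_of_sum_eq_one hr1
  have hn : (0 : ℝ) < Fintype.card ι := by exact_mod_cast Fintype.card_pos
  have hw_pos : ∀ i ∈ Finset.univ, 0 < r i ^ (2 - α) := fun i _ ↦ rpow_pos_of_pos (hr i) _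
  have hw_sum : ∑ i, r i ^ (2 - α) ≤ (Fintype.card ι : ℝ) ^ (α - 1) := by
    convert sum_rpow_le_card_rpow (β := 2 - α) (by linarith) (by linarith)
      (fun i ↦ (hr i).le) hr1 using 2
    ring
  have titu := Finset.sq_sum_div_le_sum_sq_div Finset.univ (fun i ↦ |d i|) hw_pos
  have hterm : ∀ i, |d i| ^ 2 / r i ^ (2 - α) = d i ^ 2 * r i ^ (α - 2) := fun i ↦ by
    rw [sq_abs, div_eq_mul_inv, ← rpow_neg (hr i).le, neg_sub]
  simp only [hterm] at titu
  rw [div_le_iff₀ (Finset.sum_pos hw_pos Finset.univ_nonempty)] at titu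
  calc (Fintype.card ι : ℝ) ^ (1 - α) * (∑ i, |d i|) ^ 2
      ≤ (Fintype.card ι : ℝ) ^ (1 - α) * ((∑ i, d i ^ 2 * r i ^ (α - 2)) *
          (Fintype.card ι : ℝ) ^ (α - 1)) := by
        gcongr
        refine titu.trans (mul_le_mul_of_nonneg_left hw_sum (Finset.sum_nonneg fun i _ ↦ ?_))
        exact mul_nonneg (sq_nonneg _) (rpow_nonneg (hr i).le _)
    _ = ∑ i, d i ^ 2 * r i ^ (α - 2) := by
        rw [mul_comm, mul_assoc, ← rpow_add hn]
        simp

end PowerMean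

section Simplex

variable {K : ℕ} {α : ℝ}

lemma le_breg_of_mem_relintSimplex (hα1 : 1 < α) (hα2 : α ≤ 2) {p q : Fin K → ℝ}
    (hp : p ∈ relintSimplex K) (hq : q ∈ relintSimplex K) :
    (K : ℝ) ^ (1 - α) / 2 * l1 (p - q) ^ 2 ≤ breg α p q := by
  rw [div_mul_eq_mul_div]
  refine le_breg_of_le_sum (by linarith) hα1.ne' (fun k ↦ (hp.1 k).1) (fun k ↦ (hq.1 k).1)
    fun s hs ↦ ?_
  have hline_sum : ∑ k, (q k + s * (p k - q k)) = 1 := by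
    rw [Finset.sum_add_distrib, ← Finset.mul_sum, Finset.sum_sub_distrib, hp.2, hq.2]
    ring
  simpa [l1] using card_rpow_mul_sq_sum_abs_le hα1.le hα2
    (fun k ↦ add_mul_sub_pos (hp.1 k).1 (hq.1 k).1 hs) hline_sum (fun k ↦ p k - q k)

lemma l1_sub_pos {p q : Fin K → ℝ} (hpq : p ≠ q) : 0 < l1 (p - q) := by
  obtain ⟨k, hk⟩ := Function.ne_iff.1 hpq
  exact Finset.sum_pos' (fun i _ ↦ abs_nonneg _)
    ⟨k, Finset.mem_univ k, abs_pos.2 (sub_ne_zero.2 hk)⟩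

lemma sum_neg_one_pow_of_even (hK : Even K) : ∑ k : Fin K, (-1 : ℝ) ^ (k : ℕ) = 0 := by
  rw [Fin.sum_univ_eq_sum_range (fun i ↦ (-1 : ℝ) ^ i), geom_sum_eq (by norm_num),
    hK.neg_one_pow, sub_self, zero_div]

noncomputable def perturbedUniform (K : ℕ) (ε : ℝ) : Fin K → ℝ :=
  fun k ↦ (K : ℝ)⁻¹ + ε * (-1) ^ (k : ℕ)

lemma perturbedUniform_pos {ε : ℝ} (hε0 : 0 ≤ ε) (hε : ε < (K : ℝ)⁻¹) (k : Fin K) :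
    0 < perturbedUniform K ε k := by
  rcases neg_one_pow_eq_or ℝ (k : ℕ) with h | h <;> simp only [perturbedUniform, h] <;> linarith

lemma perturbedUniform_mem_relintSimplex (hK : 2 ≤ K) (hKeven : Even K) {ε : ℝ}
    (hε0 : 0 ≤ ε) (hε : ε < (K : ℝ)⁻¹) : perturbedUniform K ε ∈ relintSimplex K := by
  have hK2 : (K : ℝ)⁻¹ ≤ 2⁻¹ := inv_anti₀ two_pos (by exact_mod_cast hK)
  refine ⟨fun k ↦ ?_, ?_⟩
  · rcases neg_one_pow_eq_or ℝ (k : ℕ) with h | h <;>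
      simp only [perturbedUniform, h] <;> constructor <;> linarith
  · have hK0 : (K : ℝ) ≠ 0 := by positivity
    simp [perturbedUniform, Finset.sum_add_distrib, ← Finset.mul_sum,
      sum_neg_one_pow_of_even hKeven, hK0]

lemma perturbedUniform_sub_apply (ε : ℝ) (k : Fin K) :
    perturbedUniform K ε k - perturbedUniform K 0 k = ε * (-1) ^ (k : ℕ) := by
  simp [perturbedUniform]

lemma l1_perturbedUniform_sub {ε : ℝ} (hε0 : 0 ≤ ε) :
    l1 (perturbedUniform K ε - perturbedUniform K 0) = K * ε := by
  simp [l1, perturbedUniform_sub_apply, abs_of_nonneg hε0]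

lemma breg_perturbedUniform_le (hα1 : 1 < α) (hα2 : α ≤ 2) {ε : ℝ} (hε0 : 0 ≤ ε)
    (hε : ε < (K : ℝ)⁻¹) :
    breg α (perturbedUniform K ε) (perturbedUniform K 0) ≤
      K * ε ^ 2 * ((K : ℝ)⁻¹ - ε) ^ (α - 2) / 2 := by
  refine breg_le_of_sum_le (by linarith) hα1.ne' (perturbedUniform_pos hε0 hε)
    (perturbedUniform_pos le_rfl (hε0.trans_lt hε)) fun s hs ↦ ?_
  have hterm : ∀ k : Fin K, (ε * (-1) ^ (k : ℕ)) ^ 2 *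
      (perturbedUniform K 0 k + s * (ε * (-1) ^ (k : ℕ))) ^ (α - 2) ≤
      ε ^ 2 * ((K : ℝ)⁻¹ - ε) ^ (α - 2) := fun k ↦ by
    have hsε : s * ε ≤ ε := mul_le_of_le_one_left hε0 hs.2
    have hsε0 : 0 ≤ s * ε := mul_nonneg hs.1 hε0
    rcases neg_one_pow_eq_or ℝ (k : ℕ) with h | h <;>
      simp only [perturbedUniform, h, add_zero, mul_one, mul_neg, neg_sq] <;>
      gcongr (ε ^ 2 * ?_) <;>
      exact rpow_le_rpow_of_nonpos (by linarith) (by linarith) (by linarith)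
  simp only [perturbedUniform_sub_apply]
  refine (Finset.sum_le_sum fun k _ ↦ hterm k).trans_eq ?_
  simp only [Finset.sum_const, Finset.card_univ, Fintype.card_fin, nsmul_eq_mul]
  ring

open Filter Topology in
lemma exists_ratio_lt (hK : 2 ≤ K) (hKeven : Even K) (hα1 : 1 < α) (hα2 : α ≤ 2) {δ : ℝ}
    (hδ : 0 < δ) : ∃ p ∈ relintSimplex K, ∃ q ∈ relintSimplex K,
      p ≠ q ∧ 2 * breg α p q / l1 (p - q) ^ 2 < (K : ℝ) ^ (1 - α) + δ := by
  have hK0 : (0 : ℝ) < K := by positivity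
  have hlim : Tendsto (fun ε ↦ ((K : ℝ)⁻¹ - ε) ^ (α - 2) / K) (𝓝[>] 0)
      (𝓝 ((K : ℝ) ^ (1 - α))) := by
    have hcont : ContinuousAt (fun ε ↦ ((K : ℝ)⁻¹ - ε) ^ (α - 2) / K) 0 :=
      ((continuousAt_const.sub continuousAt_id).rpow_const
        (Or.inl (by simpa using hK0.ne'))).div_const _
    convert hcont.tendsto.mono_left nhdsWithin_le_nhds using 2
    rw [sub_zero, inv_rpow hK0.le, ← rpow_neg hK0.le, div_eq_mul_inv, ← rpow_neg_one,
      ← rpow_add hK0]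
    ring_nf
  obtain ⟨ε, hε_lt, hε0, hεK⟩ := ((hlim.eventually (gt_mem_nhds (lt_add_of_pos_right _ hδ))).and
    (Ioo_mem_nhdsGT (inv_pos.2 hK0))).exists
  have hl1 := l1_perturbedUniform_sub (K := K) hε0.le
  refine ⟨_, perturbedUniform_mem_relintSimplex hK hKeven hε0.le hεK, _,
    perturbedUniform_mem_relintSimplex hK hKeven le_rfl (inv_pos.2 hK0), fun h ↦ ?_, ?_⟩
  · rw [h, sub_self] at hl1
    simp only [l1, Pi.zero_apply, abs_zero, Finset.sum_const_zero] at hl1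
    nlinarith
  · rw [hl1, div_lt_iff₀ (by positivity)]
    calc 2 * breg α (perturbedUniform K ε) (perturbedUniform K 0)
        ≤ K * ε ^ 2 * ((K : ℝ)⁻¹ - ε) ^ (α - 2) := by
          linarith [breg_perturbedUniform_le hα1 hα2 hε0.le hεK]
      _ = ((K : ℝ)⁻¹ - ε) ^ (α - 2) / K * (K * ε) ^ 2 := by
          field_simp
      _ < ((K : ℝ) ^ (1 - α) + δ) * (K * ε) ^ 2 := by
          gcongr

end Simplex

theorem pinsker_tsallis_even_K (K : ℕ) (hK : 2 ≤ K) (hKeven : Even K)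
    (α : ℝ) (hα1 : 1 < α) (hα2 : α ≤ 2) :
    sInf {r : ℝ | ∃ p ∈ relintSimplex K, ∃ q ∈ relintSimplex K,
        p ≠ q ∧ r = 2 * breg α p q / (l1 (p - q)) ^ 2} = (K : ℝ) ^ (1 - α) ∧
    (∀ p ∈ relintSimplex K, ∀ q ∈ relintSimplex K,
        breg α p q ≥ (K : ℝ) ^ (1 - α) / 2 * (l1 (p - q)) ^ 2) ∧
    IsGreatest {C : ℝ | 0 ≤ C ∧ ∀ p ∈ relintSimplex K, ∀ q ∈ relintSimplex K,
        breg α p q ≥ C / 2 * (l1 (p - q)) ^ 2} ((K : ℝ) ^ (1 - α)) := by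
  have pinsker p (hp : p ∈ relintSimplex K) q (hq : q ∈ relintSimplex K) :=
    le_breg_of_mem_relintSimplex hα1 hα2 hp hq
  have le_ratio {C : ℝ} {p q : Fin K → ℝ} (hpq : p ≠ q)
      (h : C / 2 * l1 (p - q) ^ 2 ≤ breg α p q) : C ≤ 2 * breg α p q / l1 (p - q) ^ 2 := by
    rw [le_div_iff₀ (pow_pos (l1_sub_pos hpq) 2)]
    linarith
  have hglb : IsGLB {r : ℝ | ∃ p ∈ relintSimplex K, ∃ q ∈ relintSimplex K,
      p ≠ q ∧ r = 2 * breg α p q / (l1 (p - q)) ^ 2} ((K : ℝ) ^ (1 - α)) := by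
    refine ⟨fun r ⟨p, hp, q, hq, hpq, hr⟩ ↦ hr ▸ le_ratio hpq (pinsker p hp q hq),
      fun b hb ↦ le_of_forall_pos_lt_add fun δ hδ ↦ ?_⟩
    obtain ⟨p, hp, q, hq, hpq, hlt⟩ := exists_ratio_lt hK hKeven hα1 hα2 hδ
    exact (hb ⟨p, hp, q, hq, hpq, rfl⟩).trans_lt hlt
  refine ⟨hglb.csInf_eq ?_, pinsker, ⟨by positivity, pinsker⟩, fun C ⟨_, hC⟩ ↦ ?_⟩
  · obtain ⟨p, hp, q, hq, hpq, -⟩ := exists_ratio_lt hK hKeven hα1 hα2 one_pos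
    exact ⟨_, p, hp, q, hq, hpq, rfl⟩
  · refine le_of_forall_pos_lt_add fun δ hδ ↦ ?_
    obtain ⟨p, hp, q, hq, hpq, hlt⟩ := exists_ratio_lt hK hKeven hα1 hα2 hδ
    exact (le_ratio hpq (hC p hp q hq)).trans_lt hlt
end

section
/- Let K ≥ 3 be an integer and let α ∈ (2, +∞). Then for every ε > 0 there exist p, q ∈ relint(Δ^K) with p ≠ q such that D_α(p‖q) < ε·‖p−q‖₁². Consequently, the infimum of D_α(p‖q)/‖p−q‖₁² over all pairs p ≠ q in relint(Δ^K) equals 0, and no positive constant C satisfies D_α(p‖q) ≥ C·‖p−q‖₁² for all p, q ∈ relint(Δ^K). -/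
open Finset Real

lemma tangent_le {a b α : ℝ} (ha : 0 ≤ a) (hb : 0 < b) (hα : 1 ≤ α) :
    b ^ α + α * b ^ (α - 1) * (a - b) ≤ a ^ α := by
  have hx : (-1 : ℝ) ≤ a / b - 1 := by
    have := div_nonneg ha hb.le; linarith
  have h := one_add_mul_self_le_rpow_one_add hx hα
  have hbα : (0:ℝ) < b ^ α := Real.rpow_pos_of_pos hb α
  have key := mul_le_mul_of_nonneg_right h hbα.le
  have hL : (1 + (a / b - 1)) ^ α * b ^ α = a ^ α := by
    rw [show 1 + (a / b - 1) = a / b by ring, Real.div_rpow ha hb.le,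
      div_mul_cancel₀ _ hbα.ne']
  have hR : (1 + α * (a / b - 1)) * b ^ α = b ^ α + α * b ^ (α - 1) * (a - b) := by
    rw [Real.rpow_sub_one hb.ne']
    field_simp
  rw [hL] at key
  rw [hR] at key
  exact key

lemma breg_eq {K : ℕ} {α : ℝ} (hα : 2 < α) (p q : Fin K → ℝ) :
    breg α p q =
      (∑ k, (p k ^ α - q k ^ α - α * q k ^ (α - 1) * (p k - q k))) / (α * (α - 1)) := by
  have hα0 : α ≠ 0 := by linarith
  have hα1 : α ≠ 1 := by linarith
  have hα1' : α - 1 ≠ 0 := by intro h; apply hα1; linarith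
  have h1α : 1 - α ≠ 0 := by intro h; apply hα1; linarith
  simp only [breg, tsallis, tsallisGrad, if_neg hα0, if_neg hα1]
  have h1 : ∑ k, -(q k ^ (α - 1)) / (α - 1) * (p k - q k)
      = (-(1 / (α - 1))) * ∑ k, q k ^ (α - 1) * (p k - q k) := by
    rw [Finset.mul_sum]
    exact Finset.sum_congr rfl fun k _ => by ring
  have h2 : ∑ k, (p k ^ α - q k ^ α - α * q k ^ (α - 1) * (p k - q k))
      = (∑ k, p k ^ α) - (∑ k, q k ^ α) - α * ∑ k, q k ^ (α - 1) * (p k - q k) := by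
    rw [Finset.sum_sub_distrib, Finset.sum_sub_distrib, Finset.mul_sum]
    congr 1
    exact Finset.sum_congr rfl fun k _ => by ring
  rw [h1, h2]
  field_simp
  ring

lemma breg_nonneg {K : ℕ} {α : ℝ} (hα : 2 < α) {p q : Fin K → ℝ}
    (hp : ∀ k, 0 < p k) (hq : ∀ k, 0 < q k) : 0 ≤ breg α p q := by
  rw [breg_eq hα]
  apply div_nonneg _ (by nlinarith)
  apply Finset.sum_nonneg
  intro k _
  have := tangent_le (hp k).le (hq k) (by linarith : (1:ℝ) ≤ α)
  linarith

lemma sum_ite_two {K : ℕ} (i j : Fin K) (hij : i ≠ j) (a b c : ℝ) :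
    ∑ k : Fin K, (if k = i then a else if k = j then b else c)
      = a + b + ((K : ℝ) - 2) * c := by
  have hpt : ∀ k : Fin K, (if k = i then a else if k = j then b else c)
      = c + (if k = i then a - c else 0) + (if k = j then b - c else 0) := by
    intro k
    by_cases h1 : k = i
    · subst h1
      rw [if_pos rfl, if_pos rfl, if_neg hij]
      ring
    · by_cases h2 : k = j
      · subst h2
        rw [if_neg h1, if_pos rfl, if_neg h1, if_pos rfl]
        ring
      · rw [if_neg h1, if_neg h2, if_neg h1, if_neg h2]
        ring
  rw [Finset.sum_congr rfl fun k _ => hpt k, Finset.sum_add_distrib,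
    Finset.sum_add_distrib, Finset.sum_const, Finset.sum_ite_eq', Finset.sum_ite_eq']
  simp [Finset.card_univ, nsmul_eq_mul]
  ring

lemma l1_pos {K : ℕ} {x : Fin K → ℝ} (hx : x ≠ 0) : 0 < l1 x := by
  obtain ⟨k, hk⟩ := Function.ne_iff.mp hx
  have h1 : |x k| ≤ l1 x :=
    Finset.single_le_sum (fun i _ => abs_nonneg (x i)) (Finset.mem_univ k)
  have : 0 < |x k| := abs_pos.mpr hk
  linarith

lemma main_construct (K : ℕ) (hK : 3 ≤ K) {α : ℝ} (hα : 2 < α) {t : ℝ}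
    (ht : 0 < t) (ht8 : t ≤ 1 / 8) :
    ∃ p ∈ relintSimplex K, ∃ q ∈ relintSimplex K, p ≠ q ∧
      breg α p q = t ^ α * ((2 : ℝ) ^ (α - 1) - 1) / (α - 1) ∧ l1 (p - q) = 2 * t := by
  have hK3 : (3 : ℝ) ≤ (K : ℝ) := by exact_mod_cast hK
  have hK2 : (0 : ℝ) < (K : ℝ) - 2 := by linarith
  set i : Fin K := ⟨0, by omega⟩ with hi
  set j : Fin K := ⟨1, by omega⟩ with hj
  have hij : i ≠ j := by simp [hi, hj, Fin.ext_iff]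
  set c : ℝ := (1 - 3 * t) / ((K : ℝ) - 2) with hc
  have hc0 : 0 < c := div_pos (by linarith) hK2
  have hc1 : c < 1 := by rw [hc, div_lt_one hK2]; linarith
  set p : Fin K → ℝ := fun k => if k = i then t else if k = j then 2 * t else c with hp
  set q : Fin K → ℝ := fun k => if k = i then 2 * t else if k = j then t else c with hq
  have hmem : ∀ f : Fin K → ℝ,
      (∀ k, f k = if k = i then t else if k = j then 2 * t else c) → True := fun _ _ => trivial
  have hsum : ((K : ℝ) - 2) * c = 1 - 3 * t := by
    rw [hc, mul_div_cancel₀ _ hK2.ne']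
  have hpmem : p ∈ relintSimplex K := by
    constructor
    · intro k
      simp only [hp]
      split_ifs <;> constructor <;> linarith
    · rw [hp, sum_ite_two i j hij, hsum]; ring
  have hqmem : q ∈ relintSimplex K := by
    constructor
    · intro k
      simp only [hq]
      split_ifs <;> constructor <;> linarith
    · rw [hq, sum_ite_two i j hij, hsum]; ring
  refine ⟨p, hpmem, q, hqmem, ?_, ?_, ?_⟩
  · intro h
    have := congrFun h i
    simp only [hp, hq, if_pos rfl] at this
    linarith
  · rw [breg_eq hα]
    have hrw : ∀ k : Fin K, p k ^ α - q k ^ α - α * q k ^ (α - 1) * (p k - q k)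
        = if k = i then t ^ α - (2 * t) ^ α - α * (2 * t) ^ (α - 1) * (t - 2 * t)
          else if k = j then (2 * t) ^ α - t ^ α - α * t ^ (α - 1) * (2 * t - t)
          else 0 := by
      intro k
      simp only [hp, hq]
      by_cases h1 : k = i
      · subst h1
        simp only [eq_self_iff_true, if_true, if_neg hij]
      · by_cases h2 : k = j
        · subst h2
          simp only [if_neg (show j ≠ i from Ne.symm hij), eq_self_iff_true, if_true]
        · simp only [if_neg h1, if_neg h2]
          ring
    rw [Finset.sum_congr rfl fun k _ => hrw k, sum_ite_two i j hij]
    have ht2 : (0 : ℝ) < 2 * t := by linarith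
    have e1 : (2 * t) ^ α = (2 * t) ^ (α - 1) * (2 * t) := by
      rw [show α = (α - 1) + 1 by ring, Real.rpow_add_one ht2.ne']
      ring_nf
    have e2 : t ^ α = t ^ (α - 1) * t := by
      rw [show α = (α - 1) + 1 by ring, Real.rpow_add_one ht.ne']
      ring_nf
    have e3 : (2 * t) ^ (α - 1) = 2 ^ (α - 1) * t ^ (α - 1) :=
      Real.mul_rpow (by norm_num) ht.le
    have hα0 : α ≠ 0 := by linarith
    have hα1 : α - 1 ≠ 0 := by intro h; nlinarith [h]
    rw [e1, e2, e3]
    field_simp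
    ring
  · have hrw : ∀ k : Fin K, |(p - q) k| = if k = i then t else if k = j then t else 0 := by
      intro k
      simp only [Pi.sub_apply, hp, hq]
      by_cases h1 : k = i
      · subst h1
        simp only [eq_self_iff_true, if_true, if_neg hij]
        rw [show t - 2 * t = -t by ring, abs_neg, abs_of_pos ht]
      · by_cases h2 : k = j
        · subst h2
          simp only [if_neg (show j ≠ i from Ne.symm hij), eq_self_iff_true, if_true]
          rw [show 2 * t - t = t by ring, abs_of_pos ht]
        · simp only [if_neg h1, if_neg h2, sub_self, abs_zero]
    rw [l1, Finset.sum_congr rfl fun k _ => hrw k, sum_ite_two i j hij]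
    ring

lemma part1 (K : ℕ) (hK : 3 ≤ K) {α : ℝ} (hα : 2 < α) :
    ∀ ε > (0 : ℝ), ∃ p ∈ relintSimplex K, ∃ q ∈ relintSimplex K,
        p ≠ q ∧ breg α p q < ε * (l1 (p - q)) ^ 2 := by
  intro ε hε
  set C0 : ℝ := ((2 : ℝ) ^ (α - 1) - 1) / (α - 1) with hC0def
  have h2pow : (1 : ℝ) < (2 : ℝ) ^ (α - 1) := by
    rw [Real.one_lt_rpow_iff_of_pos (by norm_num)]
    left; constructor <;> [norm_num; linarith]
  have hC0 : 0 < C0 := div_pos (by linarith) (by linarith)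
  have h4ε : (0 : ℝ) < 4 * ε / C0 := by positivity
  set z : ℝ := (4 * ε / C0) ^ (1 / (α - 2)) with hzdef
  have hz : 0 < z := Real.rpow_pos_of_pos h4ε _
  set t : ℝ := min (1 / 8) (z / 2) with htdef
  have ht : 0 < t := lt_min (by norm_num) (by linarith)
  have ht8 : t ≤ 1 / 8 := min_le_left _ _
  have htz : t < z := lt_of_le_of_lt (min_le_right _ _) (by linarith)
  have hpow : t ^ (α - 2) < 4 * ε / C0 := by
    have h1 : t ^ (α - 2) < z ^ (α - 2) :=
      Real.rpow_lt_rpow ht.le htz (by linarith)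
    have h2 : z ^ (α - 2) = 4 * ε / C0 := by
      rw [hzdef, ← Real.rpow_mul h4ε.le]
      rw [one_div, inv_mul_cancel₀ (by intro h; nlinarith : α - 2 ≠ 0), Real.rpow_one]
    linarith
  obtain ⟨p, hp, q, hq, hne, hbreg, hl1⟩ := main_construct K hK hα ht ht8
  refine ⟨p, hp, q, hq, hne, ?_⟩
  rw [hbreg, hl1]
  have htα : t ^ α = t ^ (α - 2) * t ^ 2 := by
    rw [← Real.rpow_natCast t 2, ← Real.rpow_add ht]
    norm_num
  have key : t ^ (α - 2) * (t ^ 2 * C0) < (4 * ε / C0) * (t ^ 2 * C0) :=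
    mul_lt_mul_of_pos_right hpow (by positivity)
  have heq : (4 * ε / C0) * (t ^ 2 * C0) = 4 * ε * t ^ 2 := by
    field_simp
  have : t ^ α * ((2 : ℝ) ^ (α - 1) - 1) / (α - 1) = t ^ (α - 2) * (t ^ 2 * C0) := by
    rw [htα, hC0def]
    field_simp
  rw [this]
  calc t ^ (α - 2) * (t ^ 2 * C0) < 4 * ε * t ^ 2 := by rw [← heq]; exact key
    _ = ε * (2 * t) ^ 2 := by ring

theorem no_pinsker_tsallis_multiclass (K : ℕ) (hK : 3 ≤ K) (α : ℝ) (hα : 2 < α) :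
    (∀ ε > (0 : ℝ), ∃ p ∈ relintSimplex K, ∃ q ∈ relintSimplex K,
        p ≠ q ∧ breg α p q < ε * (l1 (p - q)) ^ 2) ∧
    sInf {r : ℝ | ∃ p ∈ relintSimplex K, ∃ q ∈ relintSimplex K,
        p ≠ q ∧ r = breg α p q / (l1 (p - q)) ^ 2} = 0 ∧
    ¬ ∃ C > (0 : ℝ), ∀ p ∈ relintSimplex K, ∀ q ∈ relintSimplex K,
        breg α p q ≥ C * (l1 (p - q)) ^ 2 := by
  have hpart1 := part1 K hK hα
  set S : Set ℝ := {r : ℝ | ∃ p ∈ relintSimplex K, ∃ q ∈ relintSimplex K,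
      p ≠ q ∧ r = breg α p q / (l1 (p - q)) ^ 2} with hS
  have hlb : ∀ r ∈ S, 0 ≤ r := by
    rintro r ⟨p, hp, q, hq, hne, rfl⟩
    apply div_nonneg _ (sq_nonneg _)
    exact breg_nonneg hα (fun k => (hp.1 k).1) (fun k => (hq.1 k).1)
  have hne : S.Nonempty := by
    obtain ⟨p, hp, q, hq, hpq, _⟩ := hpart1 1 one_pos
    exact ⟨_, p, hp, q, hq, hpq, rfl⟩
  have hbdd : BddBelow S := ⟨0, hlb⟩
  refine ⟨hpart1, ?_, ?_⟩
  · refine le_antisymm ?_ (le_csInf hne hlb)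
    by_contra h
    push_neg at h
    obtain ⟨p, hp, q, hq, hpq, hlt⟩ := hpart1 (sInf S) h
    have hl1pos : 0 < l1 (p - q) := l1_pos (sub_ne_zero.mpr hpq)
    have hmem : breg α p q / (l1 (p - q)) ^ 2 ∈ S := ⟨p, hp, q, hq, hpq, rfl⟩
    have h1 : sInf S ≤ breg α p q / (l1 (p - q)) ^ 2 := csInf_le hbdd hmem
    have h2 : breg α p q / (l1 (p - q)) ^ 2 < sInf S := by
      rw [div_lt_iff₀ (by positivity)]
      linarith
    linarith
  · rintro ⟨C, hC, hall⟩
    obtain ⟨p, hp, q, hq, hpq, hlt⟩ := hpart1 C hC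
    have := hall p hp q hq
    linarith
end
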